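/- Let F be a field and P ∈ F[λ]^{m×n} with normal rank r > 0. Then P can be factorized in the following three ways: (i) P = L_c E R_r, where L_c ∈ F[λ]^{m×r} has columns forming a minimal basis of Col(P), R_r ∈ F[λ]^{r×n} has rows forming a minimal basis of Row(P), E ∈ F[λ]^{r×r}, and there exist unimodular U ∈ F[λ]^{m×m} and V ∈ F[λ]^{n×n} such that U P V equals the m×n matrix with E in its top-left r×r block and zeros elsewhere (i.e., E has the same invariant polynomials as P); (ii) P = L_c R, where L_c ∈ F[λ]^{m×r} has columns forming a minimal basis of Col(P), R ∈ F[λ]^{r×n}, and the m×n matrix obtained by stacking R on top of m−r zero rows is unimodularly equivalent to P (i.e., R has the same invariant polynomials as P); (iii) P = L R_r, where R_r ∈ F[λ]^{r×n} has rows forming a minimal basis of Row(P), L ∈ F[λ]^{m×r}, and the m×n matrix obtained by placing L next to n−r zero columns is unimodularly equivalent to P (i.e., L has the same invariant polynomials as P). -/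

import Mathlib

open Polynomial Matrix

noncomputable section

variable {F : Type*} [Field F]

/-- The matrix over the field of rational functions associated with a polynomial matrix. -/
def toRat {m n : ℕ} (P : Matrix (Fin m) (Fin n) F[X]) : Matrix (Fin m) (Fin n) (RatFunc F) :=
  P.map (algebraMap F[X] (RatFunc F))

/-- The normal rank of a polynomial matrix: its rank over the field of rational functions. -/
def normalRank {m n : ℕ} (P : Matrix (Fin m) (Fin n) F[X]) : ℕ := (toRat P).rank

/-- The degree of a polynomial matrix: the maximum of the degrees of its entries,
`⊥` (i.e. -∞) for the zero matrix. -/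
def matDeg {m n : ℕ} (P : Matrix (Fin m) (Fin n) F[X]) : WithBot ℕ :=
  Finset.univ.sup fun i : Fin m => Finset.univ.sup fun j : Fin n => (P i j).degree

/-- Degree of the i-th row. -/
def rowDeg {m n : ℕ} (P : Matrix (Fin m) (Fin n) F[X]) (i : Fin m) : WithBot ℕ :=
  Finset.univ.sup fun j : Fin n => (P i j).degree

/-- Degree of the j-th column. -/
def colDeg {m n : ℕ} (P : Matrix (Fin m) (Fin n) F[X]) (j : Fin n) : WithBot ℕ :=
  Finset.univ.sup fun i : Fin m => (P i j).degree

/-- Degree of the i-th row as a natural number (0 for a zero row). -/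
def rowDegNat {m n : ℕ} (P : Matrix (Fin m) (Fin n) F[X]) (i : Fin m) : ℕ :=
  Finset.univ.sup fun j : Fin n => (P i j).natDegree

/-- Degree of the j-th column as a natural number (0 for a zero column). -/
def colDegNat {m n : ℕ} (P : Matrix (Fin m) (Fin n) F[X]) (j : Fin n) : ℕ :=
  Finset.univ.sup fun i : Fin m => (P i j).natDegree

/-- Highest-row-degree coefficient matrix. -/
def hrMatrix {m n : ℕ} (P : Matrix (Fin m) (Fin n) F[X]) : Matrix (Fin m) (Fin n) F :=
  Matrix.of fun i j => (P i j).coeff (rowDegNat P i)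

/-- Highest-column-degree coefficient matrix. -/
def hcMatrix {m n : ℕ} (P : Matrix (Fin m) (Fin n) F[X]) : Matrix (Fin m) (Fin n) F :=
  Matrix.of fun i j => (P i j).coeff (colDegNat P j)

/-- A polynomial matrix is row reduced if its highest-row-degree coefficient matrix has
full row rank. -/
def RowReduced {m n : ℕ} (P : Matrix (Fin m) (Fin n) F[X]) : Prop := (hrMatrix P).rank = m

/-- A polynomial matrix is column reduced if its highest-column-degree coefficient matrix has
full column rank. -/
def ColReduced {m n : ℕ} (P : Matrix (Fin m) (Fin n) F[X]) : Prop := (hcMatrix P).rank = n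

/-- Evaluation of a polynomial matrix at a point of the algebraic closure. -/
def evalMat {m n : ℕ} (P : Matrix (Fin m) (Fin n) F[X]) (x : AlgebraicClosure F) :
    Matrix (Fin m) (Fin n) (AlgebraicClosure F) :=
  Matrix.of fun i j => aeval x (P i j)

/-- The rows of `P` form a minimal basis of the rational subspace they span (Forney's
characterization): full row rank at every point of the algebraic closure, and row reduced. -/
def IsMinimalRowBasis {m n : ℕ} (P : Matrix (Fin m) (Fin n) F[X]) : Prop :=
  (∀ x : AlgebraicClosure F, (evalMat P x).rank = m) ∧ RowReduced P

/-- The columns of `P` form a minimal basis of the rational subspace they span. -/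
def IsMinimalColBasis {m n : ℕ} (P : Matrix (Fin m) (Fin n) F[X]) : Prop :=
  (∀ x : AlgebraicClosure F, (evalMat P x).rank = n) ∧ ColReduced P

/-- The column space Col(P) over the field of rational functions. -/
def colSpace {m n : ℕ} (P : Matrix (Fin m) (Fin n) F[X]) :
    Submodule (RatFunc F) (Fin m → RatFunc F) :=
  LinearMap.range (toRat P).mulVecLin

/-- The row space Row(P) over the field of rational functions. -/
def rowSpace {m n : ℕ} (P : Matrix (Fin m) (Fin n) F[X]) :
    Submodule (RatFunc F) (Fin n → RatFunc F) :=
  LinearMap.range (toRat P)ᵀ.mulVecLin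

/-- The right nullspace N_r(P). -/
def rightNull {m n : ℕ} (P : Matrix (Fin m) (Fin n) F[X]) :
    Submodule (RatFunc F) (Fin n → RatFunc F) :=
  LinearMap.ker (toRat P).mulVecLin

/-- The left nullspace N_ℓ(P). -/
def leftNull {m n : ℕ} (P : Matrix (Fin m) (Fin n) F[X]) :
    Submodule (RatFunc F) (Fin m → RatFunc F) :=
  LinearMap.ker (toRat P)ᵀ.mulVecLin

/-!
The polynomial vectors lying in `Row(P)` form a saturated submodule `N` of `F[X]^n`: the quotient
`F[X]^n / N` is torsion-free, hence free, so `N` is a free direct summand, of rank `r`. A basis of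
`N` gives a right-invertible `R₀` with `P = L₀ R₀`. Degree-lowering row operations make `R₀`
row reduced without changing `N`; a right-invertible matrix keeps full rank at every point of
`F̄`, so the result `Rr` is a minimal basis, and as a basis of a direct summand it completes to a
unimodular matrix: `Rr V = [I 0]`, whence `P V = [L 0]`. Transposing gives `U Lc = [I; 0]`, and
with right and left inverses `K`, `Kc` the middle factor `E = Kc P K` satisfies `P = Lc E Rr` and
`U P V = diag(E, 0)`.
-/

def rectId (α : Type*) [Zero α] [One α] (m n : ℕ) : Matrix (Fin m) (Fin n) α :=
  Matrix.of fun i j => if (i : ℕ) = j then 1 else 0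

section RectId

variable {α : Type*}

theorem rectId_transpose [Zero α] [One α] (m n : ℕ) :
    (rectId α m n)ᵀ = rectId α n m := by
  ext i j
  simp [rectId, eq_comm]

variable [NonAssocSemiring α]

theorem rectId_mul {m r n : ℕ} (A : Matrix (Fin r) (Fin n) α) :
    rectId α m r * A =
      Matrix.of fun (i : Fin m) (j : Fin n) => if h : (i : ℕ) < r then A ⟨i, h⟩ j else 0 := by
  ext i j
  simp only [rectId, mul_apply, of_apply, ite_mul, one_mul, zero_mul]
  split_ifs with h
  · rw [Finset.sum_eq_single ⟨i, h⟩ (fun k _ hk => if_neg fun e => hk (Fin.ext e.symm))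
      (by simp), if_pos rfl]
  · exact Finset.sum_eq_zero fun k _ => if_neg (by omega)

theorem mul_rectId {m r n : ℕ} (A : Matrix (Fin m) (Fin r) α) :
    A * rectId α r n =
      Matrix.of fun (i : Fin m) (j : Fin n) => if h : (j : ℕ) < r then A i ⟨j, h⟩ else 0 := by
  ext i j
  simp only [rectId, mul_apply, of_apply, mul_ite, mul_one, mul_zero]
  split_ifs with h
  · rw [Finset.sum_eq_single ⟨j, h⟩ (fun k _ hk => if_neg fun e => hk (Fin.ext e))
      (by simp), if_pos rfl]
  · exact Finset.sum_eq_zero fun k _ => if_neg (by omega)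

theorem rectId_mul_rectId {m n : ℕ} (h : m ≤ n) :
    rectId α m n * rectId α n m = 1 := by
  ext i j
  rw [rectId_mul, of_apply, dif_pos (i.2.trans_le h)]
  simp [rectId, one_apply, Fin.ext_iff]

theorem rectId_mul_mul_rectId {m r n : ℕ} (E : Matrix (Fin r) (Fin r) α) :
    rectId α m r * E * rectId α r n =
      Matrix.of fun (i : Fin m) (j : Fin n) =>
        if h : (i : ℕ) < r ∧ (j : ℕ) < r then E ⟨i, h.1⟩ ⟨j, h.2⟩ else 0 := by
  ext i j
  rw [mul_rectId, rectId_mul]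
  by_cases hi : (i : ℕ) < r <;> by_cases hj : (j : ℕ) < r <;> simp [hi, hj]

end RectId

theorem LinearMap.isCompl_range_ker_of_comp_eq_id {R M N : Type*} [Ring R] [AddCommGroup M]
    [AddCommGroup N] [Module R M] [Module R N] {f : M →ₗ[R] N} {g : N →ₗ[R] M}
    (h : g ∘ₗ f = LinearMap.id) : IsCompl (LinearMap.range f) (LinearMap.ker g) := by
  have hgf : ∀ x, g (f x) = x := LinearMap.congr_fun h
  constructor
  · rw [Submodule.disjoint_def]
    rintro _ ⟨x, rfl⟩ hx
    rw [LinearMap.mem_ker, hgf] at hx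
    rw [hx, map_zero]
  · rw [codisjoint_iff, eq_top_iff]
    intro y _
    rw [← add_sub_cancel (f (g y)) y]
    exact Submodule.add_mem_sup (LinearMap.mem_range_self f _) (by simp [hgf])

theorem Submodule.isTorsionFree_quotient_comap {R K M V : Type*} [CommRing R] [Nontrivial R]
    [Field K] [Algebra R K] [FaithfulSMul R K] [AddCommGroup M] [Module R M] [AddCommGroup V]
    [Module K V] [Module R V] [IsScalarTower R K V] (f : M →ₗ[R] V) (W : Submodule K V) :
    Module.IsTorsionFree R (M ⧸ (W.restrictScalars R).comap f) := by
  refine .of_smul_eq_zero fun a x hax => or_iff_not_imp_left.2 fun ha => ?_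
  obtain ⟨v, rfl⟩ := Submodule.mkQ_surjective _ x
  rw [Submodule.mkQ_apply, ← Submodule.Quotient.mk_smul, Submodule.Quotient.mk_eq_zero] at hax
  rw [Submodule.mkQ_apply, Submodule.Quotient.mk_eq_zero]
  have ha' : algebraMap R K a ≠ 0 :=
    (map_ne_zero_iff _ (FaithfulSMul.algebraMap_injective R K)).2 ha
  have hav : algebraMap R K a • f v ∈ W := by
    rw [algebraMap_smul, ← map_smul]; exact hax
  have := W.smul_mem (algebraMap R K a)⁻¹ hav
  rwa [inv_smul_smul₀ ha'] at this

theorem Submodule.exists_isCompl_of_isTorsionFree_quotient {R M : Type*} [CommRing R] [IsDomain R]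
    [IsPrincipalIdealRing R] [AddCommGroup M] [Module R M] [Module.Finite R M]
    (N : Submodule R M) [Module.IsTorsionFree R (M ⧸ N)] :
    ∃ C : Submodule R M, IsCompl N C := by
  obtain ⟨s, hs⟩ := N.mkQ.exists_rightInverse_of_surjective N.range_mkQ
  have := LinearMap.isCompl_range_ker_of_comp_eq_id hs
  rw [Submodule.ker_mkQ] at this
  exact ⟨_, this.symm⟩

section Completion

variable {R : Type*} [CommRing R] [IsDomain R] [IsPrincipalIdealRing R]

theorem exists_isUnit_det_mul_eq_rectId_of_isCompl {n k : ℕ} {N C : Submodule R (Fin n → R)}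
    (hNC : IsCompl N C) (b : Module.Basis (Fin k) R N) :
    ∃ V : Matrix (Fin n) (Fin n) R, IsUnit V.det ∧
      Matrix.of (fun i => (b i : Fin n → R)) * V = rectId R k n := by
  obtain ⟨k', c⟩ := Submodule.basisOfPid (Pi.basisFun R (Fin n)) C
  let bc := (b.prod c).map (Submodule.prodEquivOfIsCompl N C hNC)
  have hcard : k + k' = n := by
    simpa using (Module.finrank_eq_card_basis bc).symm
  let e : Fin k ⊕ Fin k' ≃ Fin n := finSumFinEquiv.trans (finCongr hcard)
  let B : Matrix (Fin n) (Fin n) R := Matrix.of fun a => bc (e.symm a)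
  have hB : IsUnit B.det := by
    have : B = ((Pi.basisFun R (Fin n)).toMatrix (bc.reindex e))ᵀ := by
      ext a j; simp [B, Module.Basis.toMatrix_apply]
    rw [this, Matrix.det_transpose]
    have := (Pi.basisFun R (Fin n)).invertibleToMatrix (bc.reindex e)
    exact isUnit_det_of_invertible _
  refine ⟨B⁻¹, isUnit_nonsing_inv_det B hB, ?_⟩
  have hb : Matrix.of (fun i => (b i : Fin n → R)) = rectId R k n * B := by
    ext i j
    have hi : (i : ℕ) < n := by omega
    have he : e.symm ⟨i, hi⟩ = Sum.inl i := by
      rw [Equiv.symm_apply_eq]; ext; simp [e]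
    rw [rectId_mul, of_apply, of_apply, dif_pos hi]
    simp [B, he, bc]
  rw [hb, mul_nonsing_inv_cancel_right _ _ hB]

theorem exists_isUnit_det_mul_eq_rectId {r n : ℕ} {M : Matrix (Fin r) (Fin n) R}
    {K : Matrix (Fin n) (Fin r) R} (hMK : M * K = 1) :
    ∃ V : Matrix (Fin n) (Fin n) R, IsUnit V.det ∧ M * V = rectId R r n := by
  have hKM : Kᵀ.mulVecLin ∘ₗ Mᵀ.mulVecLin = LinearMap.id := by
    rw [← Matrix.mulVecLin_mul, ← Matrix.transpose_mul, hMK, Matrix.transpose_one,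
      Matrix.mulVecLin_one]
  let b := (Pi.basisFun R (Fin r)).map
    (LinearEquiv.ofLeftInverse (g := Kᵀ.mulVecLin) (LinearMap.congr_fun hKM))
  have hb : Matrix.of (fun i => (b i : Fin n → R)) = M := by
    ext i j
    simp [b, LinearEquiv.ofLeftInverse_apply]
  rw [← hb]
  exact exists_isUnit_det_mul_eq_rectId_of_isCompl
    (LinearMap.isCompl_range_ker_of_comp_eq_id hKM) b

end Completion

section FieldMatrix

variable {K : Type*} [Field K] {m n : Type*} [Fintype m] [Fintype n]

theorem Matrix.linearIndependent_row_iff_rank_eq (A : Matrix m n K) :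
    LinearIndependent K A.row ↔ A.rank = Fintype.card m := by
  rw [A.rank_eq_finrank_span_row, linearIndependent_iff_card_eq_finrank_span, Set.finrank, eq_comm]

theorem Matrix.exists_vecMul_eq_zero_of_rank_lt {A : Matrix m n K} (h : A.rank < Fintype.card m) :
    ∃ w ≠ 0, w ᵥ* A = 0 := by
  have : ¬ LinearIndependent K A.row := fun hA => h.ne (A.linearIndependent_row_iff_rank_eq.1 hA)
  obtain ⟨w, hw, i, hi⟩ := Fintype.not_linearIndependent_iff.1 this
  exact ⟨w, fun h0 => hi (congr_fun h0 i), by rw [vecMul_eq_sum]; exact hw⟩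

theorem Matrix.rank_eq_card_of_mul_eq_one [DecidableEq m] {A : Matrix m n K}
    {B : Matrix n m K} (h : A * B = 1) : A.rank = Fintype.card m := by
  refine le_antisymm A.rank_le_card_height ?_
  calc Fintype.card m = (A * B).rank := by rw [h, rank_one]
    _ ≤ A.rank := A.rank_mul_le_left B

end FieldMatrix

section PolynomialMatrix

variable {m n p : ℕ}

theorem toRat_mul (A : Matrix (Fin m) (Fin p) F[X]) (B : Matrix (Fin p) (Fin n) F[X]) :
    toRat (A * B) = toRat A * toRat B :=
  Matrix.map_mul

theorem toRat_one : toRat (1 : Matrix (Fin n) (Fin n) F[X]) = 1 :=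
  Matrix.map_one _ (map_zero _) (map_one _)

theorem toRat_transpose (A : Matrix (Fin m) (Fin n) F[X]) : toRat Aᵀ = (toRat A)ᵀ :=
  Matrix.transpose_map

theorem isUnit_det_toRat {W : Matrix (Fin n) (Fin n) F[X]} (hW : IsUnit W.det) :
    IsUnit (toRat W).det := by
  rw [toRat, ← RingHom.mapMatrix_apply, ← RingHom.map_det]
  exact hW.map _

theorem evalMat_mul (A : Matrix (Fin m) (Fin p) F[X]) (B : Matrix (Fin p) (Fin n) F[X])
    (x : AlgebraicClosure F) : evalMat (A * B) x = evalMat A x * evalMat B x :=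
  Matrix.map_mul (f := (aeval x).toRingHom)

theorem evalMat_one (x : AlgebraicClosure F) :
    evalMat (1 : Matrix (Fin n) (Fin n) F[X]) x = 1 :=
  Matrix.map_one (aeval x).toRingHom (map_zero _) (map_one _)

theorem normalRank_transpose (A : Matrix (Fin m) (Fin n) F[X]) :
    normalRank Aᵀ = normalRank A := by
  rw [normalRank, toRat_transpose, Matrix.rank_transpose, normalRank]

theorem normalRank_mul_of_isUnit_det {W : Matrix (Fin m) (Fin m) F[X]} (hW : IsUnit W.det)
    (A : Matrix (Fin m) (Fin n) F[X]) : normalRank (W * A) = normalRank A := by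
  rw [normalRank, toRat_mul, Matrix.rank_mul_eq_right_of_isUnit_det _ _ (isUnit_det_toRat hW),
    normalRank]

theorem normalRank_eq_of_mul_eq_one {A : Matrix (Fin m) (Fin n) F[X]}
    {B : Matrix (Fin n) (Fin m) F[X]} (h : A * B = 1) : normalRank A = m := by
  rw [normalRank]
  have : toRat A * toRat B = 1 := by rw [← toRat_mul, h, toRat_one]
  simpa using Matrix.rank_eq_card_of_mul_eq_one this

theorem normalRank_eq_finrank_rowSpace (A : Matrix (Fin m) (Fin n) F[X]) :
    normalRank A = Module.finrank (RatFunc F) (rowSpace A) := by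
  rw [normalRank, ← Matrix.rank_transpose]
  rfl

theorem rowSpace_eq_span (A : Matrix (Fin m) (Fin n) F[X]) :
    rowSpace A = Submodule.span (RatFunc F) (Set.range (toRat A)) := by
  rw [rowSpace, Matrix.range_mulVecLin, Matrix.col_transpose]
  rfl

theorem rowSpace_mul_le (A : Matrix (Fin m) (Fin p) F[X]) (B : Matrix (Fin p) (Fin n) F[X]) :
    rowSpace (A * B) ≤ rowSpace B := by
  rintro _ ⟨x, rfl⟩
  exact ⟨(toRat A)ᵀ *ᵥ x, by
    simp only [Matrix.mulVecLin_apply, Matrix.mulVec_mulVec, toRat_mul, Matrix.transpose_mul]⟩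

theorem rowSpace_mul_of_isUnit_det {W : Matrix (Fin m) (Fin m) F[X]} (hW : IsUnit W.det)
    (A : Matrix (Fin m) (Fin n) F[X]) : rowSpace (W * A) = rowSpace A := by
  refine le_antisymm (rowSpace_mul_le W A) ?_
  calc rowSpace A = rowSpace (W⁻¹ * (W * A)) := by rw [Matrix.nonsing_inv_mul_cancel_left _ _ hW]
    _ ≤ rowSpace (W * A) := rowSpace_mul_le _ _

theorem colSpace_transpose (A : Matrix (Fin m) (Fin n) F[X]) : colSpace Aᵀ = rowSpace A := by
  rw [colSpace, rowSpace, toRat_transpose]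

theorem isMinimalColBasis_transpose {A : Matrix (Fin m) (Fin n) F[X]} :
    IsMinimalColBasis Aᵀ ↔ IsMinimalRowBasis A := by
  have heval (x : AlgebraicClosure F) : evalMat Aᵀ x = (evalMat A x)ᵀ := rfl
  have hlead : hcMatrix Aᵀ = (hrMatrix A)ᵀ := rfl
  simp only [IsMinimalColBasis, IsMinimalRowBasis, ColReduced, RowReduced, heval, hlead,
    Matrix.rank_transpose]

end PolynomialMatrix

theorem Matrix.det_one_updateRow {R n : Type*} [CommRing R] [Fintype n] [DecidableEq n]
    (i : n) (u : n → R) : ((1 : Matrix n n R).updateRow i u).det = u i := by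
  have hu : ∑ k, u k • (1 : Matrix n n R) k = u := by
    ext j; simp [Matrix.one_apply]
  simpa [hu] using Matrix.det_updateRow_sum (1 : Matrix n n R) i u

theorem Polynomial.coeff_X_pow_sub_mul_of_natDegree_le {R : Type*} [Semiring R] {q : R[X]}
    {e D k : ℕ} (hq : q.natDegree ≤ e) (he : e ≤ D) (hk : D ≤ k) :
    (X ^ (D - e) * q).coeff k = if k = D then q.coeff e else 0 := by
  rw [coeff_X_pow_mul', if_pos (by omega)]
  split_ifs with hkD
  · congr 1; omega
  · exact coeff_eq_zero_of_natDegree_lt (by omega)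

section RowReduction

variable {r n : ℕ}

theorem natDegree_le_rowDegNat (M : Matrix (Fin r) (Fin n) F[X]) (i : Fin r) (j : Fin n) :
    (M i j).natDegree ≤ rowDegNat M i :=
  Finset.le_sup (f := fun j => (M i j).natDegree) (Finset.mem_univ j)

theorem rowDegNat_lt_of_coeff_eq_zero {M : Matrix (Fin r) (Fin n) F[X]} {i : Fin r} (hi : M i ≠ 0)
    {D : ℕ} (hD : ∀ j k, D ≤ k → (M i j).coeff k = 0) : rowDegNat M i < D := by
  obtain ⟨j₀, hj₀⟩ := Function.ne_iff.1 hi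
  have hD0 : 0 < D := by
    by_contra! h0
    exact hj₀ (Polynomial.ext fun k => hD j₀ k (by omega))
  refine (Finset.sup_lt_iff (by simpa using hD0)).2 fun j _ => ?_
  by_cases hz : M i j = 0
  · simpa [hz] using hD0
  rw [natDegree_lt_iff_degree_lt hz, degree_lt_iff_coeff_zero]
  exact fun k hk => hD j k (by exact_mod_cast hk)

theorem row_ne_zero_of_normalRank_eq {M : Matrix (Fin r) (Fin n) F[X]} (hM : normalRank M = r)
    (i : Fin r) : M i ≠ 0 := by
  have hli := (toRat M).linearIndependent_row_iff_rank_eq.2 (by simpa [normalRank] using hM)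
  intro h0
  exact hli.ne_zero i (by ext j; simp [toRat, Matrix.row, congr_fun h0 j])

/-- Shifting row `i` by `X ^ (D - deg_i)` moves its leading coefficients to degree `D`, where the
combination `w` cancels them. -/
theorem coeff_vecMul_eq_zero_of_vecMul_hrMatrix_eq_zero (M : Matrix (Fin r) (Fin n) F[X])
    {w : Fin r → F} (hw : w ᵥ* hrMatrix M = 0) {D : ℕ}
    (hD : ∀ k, w k ≠ 0 → rowDegNat M k ≤ D) (j : Fin n) {k : ℕ} (hk : D ≤ k) :
    (((fun i => C (w i) * X ^ (D - rowDegNat M i)) ᵥ* M) j).coeff k = 0 := by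
  calc (((fun i => C (w i) * X ^ (D - rowDegNat M i)) ᵥ* M) j).coeff k
      = ∑ i, w i * (if k = D then hrMatrix M i j else 0) := by
        simp only [Matrix.vecMul, dotProduct, finsetSum_coeff, mul_assoc, coeff_C_mul]
        refine Finset.sum_congr rfl fun i _ => ?_
        by_cases hwi : w i = 0
        · simp [hwi]
        rw [coeff_X_pow_sub_mul_of_natDegree_le (natDegree_le_rowDegNat M i j) (hD i hwi) hk]
        rfl
    _ = if k = D then (w ᵥ* hrMatrix M) j else 0 := by
        split_ifs <;> simp [Matrix.vecMul, dotProduct]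
    _ = 0 := by simp [hw]

theorem exists_isUnit_det_sum_rowDegNat_lt {M : Matrix (Fin r) (Fin n) F[X]}
    (hM : normalRank M = r) (hred : ¬ RowReduced M) :
    ∃ W : Matrix (Fin r) (Fin r) F[X], IsUnit W.det ∧
      ∑ i, rowDegNat (W * M) i < ∑ i, rowDegNat M i := by
  classical
  obtain ⟨w, hw0, hw⟩ := (hrMatrix M).exists_vecMul_eq_zero_of_rank_lt
    (by simpa using lt_of_le_of_ne (hrMatrix M).rank_le_height hred)
  obtain ⟨i₀, hi₀, hmax⟩ := Finset.exists_max_image {i | w i ≠ 0} (rowDegNat M)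
    (by simpa [Finset.filter_nonempty_iff] using Function.ne_iff.1 hw0)
  set D := rowDegNat M i₀
  set u : Fin r → F[X] := fun i => C (w i) * X ^ (D - rowDegNat M i)
  set W := (1 : Matrix (Fin r) (Fin r) F[X]).updateRow i₀ u
  have hW : IsUnit W.det := by
    rw [Matrix.det_one_updateRow]
    simpa [u, D] using (Finset.mem_filter.1 hi₀).2
  have hWM : W * M = M.updateRow i₀ (u ᵥ* M) := by rw [Matrix.updateRow_mul, Matrix.one_mul]
  have hlt : rowDegNat (W * M) i₀ < D := by
    refine rowDegNat_lt_of_coeff_eq_zero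
      (row_ne_zero_of_normalRank_eq (by rwa [normalRank_mul_of_isUnit_det hW]) i₀) ?_
    intro j k hk
    rw [hWM, Matrix.updateRow_self]
    exact coeff_vecMul_eq_zero_of_vecMul_hrMatrix_eq_zero M hw
      (fun i hi => hmax i (by simpa using hi)) j hk
  refine ⟨W, hW, Finset.sum_lt_sum (fun i _ => ?_) ⟨i₀, Finset.mem_univ _, hlt⟩⟩
  rcases eq_or_ne i i₀ with rfl | hi
  · exact hlt.le
  · simp [rowDegNat, hWM, Matrix.updateRow_ne hi]

theorem exists_isUnit_det_rowReduced_mul {M : Matrix (Fin r) (Fin n) F[X]}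
    (hM : normalRank M = r) :
    ∃ W : Matrix (Fin r) (Fin r) F[X], IsUnit W.det ∧ RowReduced (W * M) := by
  induction hs : ∑ i, rowDegNat M i using Nat.strong_induction_on generalizing M with
  | _ s ih =>
  by_cases hred : RowReduced M
  · exact ⟨1, by simp, by rwa [Matrix.one_mul]⟩
  obtain ⟨W₁, hW₁, hlt⟩ := exists_isUnit_det_sum_rowDegNat_lt hM hred
  obtain ⟨W₂, hW₂, hred₂⟩ :=
    ih _ (hs ▸ hlt) (by rwa [normalRank_mul_of_isUnit_det hW₁]) rfl
  exact ⟨W₂ * W₁, by rw [Matrix.det_mul]; exact hW₂.mul hW₁, by rwa [Matrix.mul_assoc]⟩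

end RowReduction

section Factorization

variable {m n r : ℕ}

theorem exists_rightInverse_rowSpace_eq (P : Matrix (Fin m) (Fin n) F[X])
    (hrank : normalRank P = r) :
    ∃ (R₀ : Matrix (Fin r) (Fin n) F[X]) (K₀ : Matrix (Fin n) (Fin r) F[X])
      (L₀ : Matrix (Fin m) (Fin r) F[X]),
      R₀ * K₀ = 1 ∧ P = L₀ * R₀ ∧ rowSpace R₀ = rowSpace P := by
  let ι : (Fin n → F[X]) →ₗ[F[X]] (Fin n → RatFunc F) :=
    LinearMap.compLeft (Algebra.linearMap F[X] (RatFunc F)) (Fin n)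
  let N := ((rowSpace P).restrictScalars F[X]).comap ι
  have := Submodule.isTorsionFree_quotient_comap ι (rowSpace P)
  obtain ⟨C, hNC⟩ := N.exists_isCompl_of_isTorsionFree_quotient
  obtain ⟨k, b⟩ := Submodule.basisOfPid (Pi.basisFun F[X] (Fin n)) N
  obtain ⟨V, -, hbV⟩ := exists_isUnit_det_mul_eq_rectId_of_isCompl hNC b
  let R₀ := Matrix.of fun i => (b i : Fin n → F[X])
  have hkn : k ≤ n := by
    simpa using (b.linearIndependent.map' N.subtype N.ker_subtype).fintype_card_le_finrank
  have hRK : R₀ * (V * rectId F[X] n k) = 1 := by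
    rw [← Matrix.mul_assoc, hbV, rectId_mul_rectId hkn]
  have hP_mem (i : Fin m) : P i ∈ N := by
    show toRat P i ∈ rowSpace P
    rw [rowSpace_eq_span]
    exact Submodule.subset_span ⟨i, rfl⟩
  let L₀ := Matrix.of fun i => b.repr ⟨P i, hP_mem i⟩
  have hPL : P = L₀ * R₀ := by
    funext i
    rw [Matrix.mul_apply_eq_vecMul, Matrix.vecMul_eq_sum]
    exact (congr_arg Subtype.val (b.sum_repr ⟨P i, hP_mem i⟩)).symm.trans
      (Submodule.coe_sum _ _ _)
  have hS : rowSpace R₀ = rowSpace P := by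
    refine le_antisymm ?_ (hPL ▸ rowSpace_mul_le L₀ R₀)
    rw [rowSpace_eq_span, Submodule.span_le]
    rintro _ ⟨i, rfl⟩
    exact (b i).2
  obtain rfl : k = r := by
    rw [← normalRank_eq_of_mul_eq_one hRK, ← hrank, normalRank_eq_finrank_rowSpace,
      normalRank_eq_finrank_rowSpace, hS]
  exact ⟨R₀, _, L₀, hRK, hPL, hS⟩

theorem exists_minimalRowBasis_factorization (P : Matrix (Fin m) (Fin n) F[X])
    (hrank : normalRank P = r) :
    ∃ (L : Matrix (Fin m) (Fin r) F[X]) (Rr : Matrix (Fin r) (Fin n) F[X])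
      (K : Matrix (Fin n) (Fin r) F[X]) (V : Matrix (Fin n) (Fin n) F[X]),
      P = L * Rr ∧ Rr * K = 1 ∧ IsMinimalRowBasis Rr ∧ rowSpace Rr = rowSpace P ∧
      IsUnit V.det ∧ Rr * V = rectId F[X] r n := by
  obtain ⟨R₀, K₀, L₀, hRK₀, hPL₀, hS₀⟩ := exists_rightInverse_rowSpace_eq P hrank
  obtain ⟨W, hW, hred⟩ := exists_isUnit_det_rowReduced_mul (normalRank_eq_of_mul_eq_one hRK₀)
  have hRK : W * R₀ * (K₀ * W⁻¹) = 1 := by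
    rw [Matrix.mul_assoc, ← Matrix.mul_assoc R₀, hRK₀, Matrix.one_mul,
      Matrix.mul_nonsing_inv _ hW]
  obtain ⟨V, hV, hRV⟩ := exists_isUnit_det_mul_eq_rectId hRK
  have hfull (x : AlgebraicClosure F) : (evalMat (W * R₀) x).rank = r := by
    have : evalMat (W * R₀) x * evalMat (K₀ * W⁻¹) x = 1 := by
      rw [← evalMat_mul, hRK, evalMat_one]
    simpa using Matrix.rank_eq_card_of_mul_eq_one this
  refine ⟨L₀ * W⁻¹, W * R₀, K₀ * W⁻¹, V, ?_, hRK, ⟨hfull, hred⟩,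
    (rowSpace_mul_of_isUnit_det hW R₀).trans hS₀, hV, hRV⟩
  rw [Matrix.mul_assoc, Matrix.nonsing_inv_mul_cancel_left _ _ hW, hPL₀]

theorem exists_minimalColBasis_factorization (P : Matrix (Fin m) (Fin n) F[X])
    (hrank : normalRank P = r) :
    ∃ (Lc : Matrix (Fin m) (Fin r) F[X]) (R : Matrix (Fin r) (Fin n) F[X])
      (K : Matrix (Fin r) (Fin m) F[X]) (U : Matrix (Fin m) (Fin m) F[X]),
      P = Lc * R ∧ K * Lc = 1 ∧ IsMinimalColBasis Lc ∧ colSpace Lc = colSpace P ∧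
      IsUnit U.det ∧ U * Lc = rectId F[X] m r := by
  obtain ⟨L, Rr, K, V, hP, hRK, hmin, hS, hV, hRV⟩ :=
    exists_minimalRowBasis_factorization Pᵀ ((normalRank_transpose P).trans hrank)
  refine ⟨Rrᵀ, Lᵀ, Kᵀ, Vᵀ, ?_, ?_, isMinimalColBasis_transpose.2 hmin, ?_, ?_, ?_⟩
  · rw [← Matrix.transpose_mul, ← hP, Matrix.transpose_transpose]
  · rw [← Matrix.transpose_mul, hRK, Matrix.transpose_one]
  · rw [colSpace_transpose, hS, ← colSpace_transpose, Matrix.transpose_transpose]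
  · rwa [Matrix.det_transpose]
  · rw [← Matrix.transpose_mul, hRV, rectId_transpose]

end Factorization

theorem minimal_rank_factorizations_exist_general
    {F : Type*} [Field F] {m n r : ℕ}
    (P : Matrix (Fin m) (Fin n) F[X])
    (hrank : normalRank P = r) :
    (∃ (Lc : Matrix (Fin m) (Fin r) F[X]) (E : Matrix (Fin r) (Fin r) F[X])
       (Rr : Matrix (Fin r) (Fin n) F[X])
       (U : Matrix (Fin m) (Fin m) F[X]) (V : Matrix (Fin n) (Fin n) F[X]),
        P = Lc * E * Rr ∧
        IsMinimalColBasis Lc ∧ colSpace Lc = colSpace P ∧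
        IsMinimalRowBasis Rr ∧ rowSpace Rr = rowSpace P ∧
        IsUnit U.det ∧ IsUnit V.det ∧
        U * P * V = Matrix.of (fun (i : Fin m) (j : Fin n) =>
          if h : (i : ℕ) < r ∧ (j : ℕ) < r then E ⟨i, h.1⟩ ⟨j, h.2⟩ else 0)) ∧
    (∃ (Lc : Matrix (Fin m) (Fin r) F[X]) (R : Matrix (Fin r) (Fin n) F[X])
       (U : Matrix (Fin m) (Fin m) F[X]) (V : Matrix (Fin n) (Fin n) F[X]),
        P = Lc * R ∧
        IsMinimalColBasis Lc ∧ colSpace Lc = colSpace P ∧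
        IsUnit U.det ∧ IsUnit V.det ∧
        U * P * V = Matrix.of (fun (i : Fin m) (j : Fin n) =>
          if h : (i : ℕ) < r then R ⟨i, h⟩ j else 0)) ∧
    (∃ (L : Matrix (Fin m) (Fin r) F[X]) (Rr : Matrix (Fin r) (Fin n) F[X])
       (U : Matrix (Fin m) (Fin m) F[X]) (V : Matrix (Fin n) (Fin n) F[X]),
        P = L * Rr ∧
        IsMinimalRowBasis Rr ∧ rowSpace Rr = rowSpace P ∧
        IsUnit U.det ∧ IsUnit V.det ∧
        U * P * V = Matrix.of (fun (i : Fin m) (j : Fin n) =>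
          if h : (j : ℕ) < r then L i ⟨j, h⟩ else 0)) := by
  obtain ⟨L, Rr, K, V, hPL, hRK, hRr, hRrS, hV, hRV⟩ :=
    exists_minimalRowBasis_factorization P hrank
  obtain ⟨Lc, R, Kc, U, hPR, hKL, hLc, hLcS, hU, hUL⟩ :=
    exists_minimalColBasis_factorization P hrank
  have hPE : P = Lc * (Kc * P * K) * Rr := by
    have hleft : Lc * Kc * P = P := by
      rw [hPR, ← Matrix.mul_assoc, Matrix.mul_assoc Lc Kc Lc, hKL, Matrix.mul_one]
    have hright : P * K * Rr = P := by
      rw [hPL, Matrix.mul_assoc L Rr K, hRK, Matrix.mul_one]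
    simp only [← Matrix.mul_assoc, hleft, hright]
  refine ⟨⟨Lc, Kc * P * K, Rr, U, V, hPE, hLc, hLcS, hRr, hRrS, hU, hV, ?_⟩,
    ⟨Lc, R, U, 1, hPR, hLc, hLcS, hU, by simp, ?_⟩,
    ⟨L, Rr, 1, V, hPL, hRr, hRrS, by simp, hV, ?_⟩⟩
  · rw [← rectId_mul_mul_rectId, ← hUL, ← hRV]
    conv_lhs => rw [hPE]
    simp only [Matrix.mul_assoc]
  · rw [Matrix.mul_one, hPR, ← Matrix.mul_assoc, hUL, rectId_mul]
  · rw [Matrix.one_mul, hPL, Matrix.mul_assoc, hRV, mul_rectId]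

/-- The three minimal rank factorizations of a polynomial matrix of normal rank r > 0.
The conditions about invariant polynomials are stated as unimodular equivalence of P with
the corresponding factor embedded into an m×n matrix padded with zeros. -/
theorem minimal_rank_factorizations_exist
    {F : Type*} [Field F] {m n r : ℕ}
    (P : Matrix (Fin m) (Fin n) F[X])
    (hrank : normalRank P = r) (hr0 : 0 < r) :
    (∃ (Lc : Matrix (Fin m) (Fin r) F[X]) (E : Matrix (Fin r) (Fin r) F[X])
       (Rr : Matrix (Fin r) (Fin n) F[X])
       (U : Matrix (Fin m) (Fin m) F[X]) (V : Matrix (Fin n) (Fin n) F[X]),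
        P = Lc * E * Rr ∧
        IsMinimalColBasis Lc ∧ colSpace Lc = colSpace P ∧
        IsMinimalRowBasis Rr ∧ rowSpace Rr = rowSpace P ∧
        IsUnit U.det ∧ IsUnit V.det ∧
        U * P * V = Matrix.of (fun (i : Fin m) (j : Fin n) =>
          if h : (i : ℕ) < r ∧ (j : ℕ) < r then E ⟨i, h.1⟩ ⟨j, h.2⟩ else 0)) ∧
    (∃ (Lc : Matrix (Fin m) (Fin r) F[X]) (R : Matrix (Fin r) (Fin n) F[X])
       (U : Matrix (Fin m) (Fin m) F[X]) (V : Matrix (Fin n) (Fin n) F[X]),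
        P = Lc * R ∧
        IsMinimalColBasis Lc ∧ colSpace Lc = colSpace P ∧
        IsUnit U.det ∧ IsUnit V.det ∧
        U * P * V = Matrix.of (fun (i : Fin m) (j : Fin n) =>
          if h : (i : ℕ) < r then R ⟨i, h⟩ j else 0)) ∧
    (∃ (L : Matrix (Fin m) (Fin r) F[X]) (Rr : Matrix (Fin r) (Fin n) F[X])
       (U : Matrix (Fin m) (Fin m) F[X]) (V : Matrix (Fin n) (Fin n) F[X]),
        P = L * Rr ∧
        IsMinimalRowBasis Rr ∧ rowSpace Rr = rowSpace P ∧
        IsUnit U.det ∧ IsUnit V.det ∧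
        U * P * V = Matrix.of (fun (i : Fin m) (j : Fin n) =>
          if h : (j : ℕ) < r then L i ⟨j, h⟩ else 0)) :=
  minimal_rank_factorizations_exist_general P hrank
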